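/- For the projective tensor product H* ⊗̂ H of a Hilbert space dual with itself, there is a continuous linear injection of H* ⊗̂ H into the bounded operators on H whose image lies in the trace class operators; equivalently: every element of the projective tensor product H* ⊗̂ H induces a trace-class operator on H. -/

import Mathlib

open scoped InnerProductSpace

/-!
The rank-one operators `x ↦ φₙ(x) • vₙ` have operator norm `‖φₙ‖ ‖vₙ‖`, so their series converges
absolutely in the Banach space of bounded operators. For orthonormal families `u, w` and the Riesz
representative `yₙ` of `φₙ`, Cauchy–Schwarz followed by Bessel's inequality gives
`∑ₖ |⟪w k, yₙ⟫| |⟪u k, vₙ⟫| ≤ ‖yₙ‖ ‖vₙ‖ = ‖φₙ‖ ‖vₙ‖`; summing over `n` and exchanging the order of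
summation of this nonnegative double series dominates `∑ₖ |⟪u k, T (w k)⟫|`.
-/

section Series

variable {𝕜 E F ι : Type*} [NontriviallyNormedField 𝕜] [NormedAddCommGroup E] [NormedSpace 𝕜 E]
  [NormedAddCommGroup F] [NormedSpace 𝕜 F] [CompleteSpace F]

theorem summable_smulRight_of_summable_norm_mul_norm {φ : ι → StrongDual 𝕜 E} {v : ι → F}
    (h : Summable fun n => ‖φ n‖ * ‖v n‖) : Summable fun n => (φ n).smulRight (v n) :=
  Summable.of_norm (by simpa using h)

theorem exists_hasSum_smul_apply_of_summable_norm_mul_norm {φ : ι → StrongDual 𝕜 E} {v : ι → F}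
    (h : Summable fun n => ‖φ n‖ * ‖v n‖) :
    ∃ T : E →L[𝕜] F, ∀ x, HasSum (fun n => φ n x • v n) (T x) :=
  ⟨∑' n, (φ n).smulRight (v n), fun x => by
    simpa using (ContinuousLinearMap.apply 𝕜 F x).hasSum
      (summable_smulRight_of_summable_norm_mul_norm h).hasSum⟩

end Series

section Orthonormal

variable {𝕜 E ι κ : Type*} [RCLike 𝕜] [NormedAddCommGroup E] [InnerProductSpace 𝕜 E]
  {u w : κ → E}

theorem Orthonormal.sum_norm_inner_mul_norm_inner_le (hu : Orthonormal 𝕜 u)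
    (hw : Orthonormal 𝕜 w) (x y : E) (s : Finset κ) :
    ∑ k ∈ s, ‖⟪w k, x⟫_𝕜‖ * ‖⟪u k, y⟫_𝕜‖ ≤ ‖x‖ * ‖y‖ :=
  calc ∑ k ∈ s, ‖⟪w k, x⟫_𝕜‖ * ‖⟪u k, y⟫_𝕜‖
      ≤ √(∑ k ∈ s, ‖⟪w k, x⟫_𝕜‖ ^ 2) * √(∑ k ∈ s, ‖⟪u k, y⟫_𝕜‖ ^ 2) :=
        Real.sum_mul_le_sqrt_mul_sqrt _ _ _
    _ ≤ √(‖x‖ ^ 2) * √(‖y‖ ^ 2) := by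
        gcongr
        exacts [hw.sum_inner_products_le x, hu.sum_inner_products_le y]
    _ = ‖x‖ * ‖y‖ := by simp only [norm_nonneg, Real.sqrt_sq]

theorem Orthonormal.summable_norm_inner_mul_norm_inner (hu : Orthonormal 𝕜 u)
    (hw : Orthonormal 𝕜 w) (x y : E) :
    Summable fun k => ‖⟪w k, x⟫_𝕜‖ * ‖⟪u k, y⟫_𝕜‖ :=
  summable_of_sum_le (fun _ => by positivity) (hu.sum_norm_inner_mul_norm_inner_le hw x y)

theorem Orthonormal.tsum_norm_inner_mul_norm_inner_le (hu : Orthonormal 𝕜 u)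
    (hw : Orthonormal 𝕜 w) (x y : E) :
    ∑' k, ‖⟪w k, x⟫_𝕜‖ * ‖⟪u k, y⟫_𝕜‖ ≤ ‖x‖ * ‖y‖ :=
  tsum_le_of_sum_le' (by positivity) (hu.sum_norm_inner_mul_norm_inner_le hw x y)

theorem summable_norm_inner_apply_of_hasSum_smul [CompleteSpace E] {φ : ι → StrongDual 𝕜 E}
    {v : ι → E} {T : E → E} (hT : ∀ x, HasSum (fun n => φ n x • v n) (T x))
    (hsum : Summable fun n => ‖φ n‖ * ‖v n‖) (hu : Orthonormal 𝕜 u) (hw : Orthonormal 𝕜 w) :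
    Summable fun k => ‖⟪u k, T (w k)⟫_𝕜‖ := by
  set y : ι → E := fun n => (InnerProductSpace.toDual 𝕜 E).symm (φ n)
  have hφ (n : ι) (x : E) : φ n x = ⟪y n, x⟫_𝕜 := InnerProductSpace.toDual_symm_apply.symm
  have hy (n : ι) : ‖y n‖ = ‖φ n‖ := (InnerProductSpace.toDual 𝕜 E).symm.norm_map (φ n)
  set a : ι × κ → ℝ := fun p => ‖⟪w p.2, y p.1⟫_𝕜‖ * ‖⟪u p.2, v p.1⟫_𝕜‖
  have ha : Summable a := by
    refine (summable_prod_of_nonneg fun _ => by positivity).mpr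
      ⟨fun n => hu.summable_norm_inner_mul_norm_inner hw (y n) (v n), ?_⟩
    refine hsum.of_nonneg_of_le (fun _ => tsum_nonneg fun _ => by positivity) fun n => ?_
    simpa only [hy] using hu.tsum_norm_inner_mul_norm_inner_le hw (y n) (v n)
  have ha_swap : Summable (a ∘ Prod.swap) := ha.prod_symm
  refine .of_nonneg_of_le (fun _ => norm_nonneg _) (fun k => ?_)
    ((summable_prod_of_nonneg fun _ => mul_nonneg (norm_nonneg _) (norm_nonneg _)).mp ha_swap).2
  have hk : HasSum (fun n => ⟪u k, φ n (w k) • v n⟫_𝕜) ⟪u k, T (w k)⟫_𝕜 :=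
    (innerSL 𝕜 (u k)).hasSum (hT (w k))
  refine hk.norm_le_of_bounded (ha_swap.prod_factor k).hasSum fun n => ?_
  simp only [inner_smul_right, norm_mul, hφ, norm_inner_symm, Function.comp_apply, Prod.swap,
    a, le_refl]

end Orthonormal

/-- Every element of the projective tensor product `H* ⊗̂ H` (represented by
sequences `φₙ ∈ H*`, `vₙ ∈ H` with `∑ ‖φₙ‖‖vₙ‖ < ∞`) induces a bounded operator
`T x = ∑ φₙ(x) • vₙ` on `H` which is trace class: for all orthonormal families
`u, w` the sequence `⟨u k, T (w k)⟩` is absolutely summable. -/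
theorem projective_tensor_gives_trace_class
    (H : Type*) [NormedAddCommGroup H] [InnerProductSpace ℂ H] [CompleteSpace H]
    (φ : ℕ → (H →L[ℂ] ℂ)) (v : ℕ → H)
    (hsum : Summable fun n => ‖φ n‖ * ‖v n‖) :
    ∃ T : H →L[ℂ] H,
      (∀ x : H, HasSum (fun n => φ n x • v n) (T x)) ∧
      (∀ u w : ℕ → H, Orthonormal ℂ u → Orthonormal ℂ w →
        Summable fun k => ‖⟪u k, T (w k)⟫_ℂ‖) := by
  obtain ⟨T, hT⟩ := exists_hasSum_smul_apply_of_summable_norm_mul_norm hsum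
  exact ⟨T, hT, fun u w hu hw => summable_norm_inner_apply_of_hasSum_smul hT hsum hu hw⟩
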